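/- arXiv:1906.06611 — 7 statements merged into one kernel-verified Lean document; each statement's English description precedes it below -/
import Mathlib

section
/- For a finite simple graph G=(V,E) and a locally injective function g:V→ℝ (i.e., g(x)≠g(y) whenever (x,y)∈E), the f-polynomial satisfies f_G(t) = 1 + t·Σ_{x∈V} f_{S_g(x)}(t), where S_g(x) is the subgraph of the unit sphere S(x) induced by the vertices y adjacent to x with g(y)<g(x). -/
open Finset
open scoped Classical

/-- The f-polynomial of a finite simple graph:
`f_G(t) = 1 + f_0 t + f_1 t^2 + ... ` where `f_k` counts cliques on `k+1` vertices. -/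
noncomputable def fPoly {V : Type*} [Fintype V] (G : SimpleGraph V) (t : ℝ) : ℝ :=
  1 + ∑ k ∈ Finset.range (Fintype.card V), ((G.cliqueFinset (k + 1)).card : ℝ) * t ^ (k + 1)

/-- The part of the unit sphere of `x` where `g` is smaller than `g x`. -/
def sphereSet {V : Type*} (G : SimpleGraph V) (g : V → ℝ) (x : V) : Set V :=
  {y | G.Adj x y ∧ g y < g x}

/-- The sub-level unit sphere `S_g(x)` as an induced subgraph. -/
def sphereBelow {V : Type*} (G : SimpleGraph V) (g : V → ℝ) (x : V) :
    SimpleGraph (sphereSet G g x) :=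
  G.induce (sphereSet G g x)

/-!
Write `f_G(t) = ∑ t ^ |s|` over all cliques `s` of `G`, the empty one included. Since `g` is
injective on every clique, a nonempty clique `s` has a unique vertex `x` where `g` is maximal,
and `s \ {x}` is a clique of `S_g(x)`. Conversely the cone `{x} ∪ L` over a clique `L` of `S_g(x)`
is a clique of `G` with `g`-maximum at `x`. So the nonempty cliques of `G` correspond to pairs
`(x, L)`, with `|s| = |L| + 1`, which is the formula.
-/

namespace SimpleGraph

section CliqueSum

variable {W : Type*} [Fintype W]

noncomputable def cliqueSum (H : SimpleGraph W) (t : ℝ) : ℝ :=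
  ∑ s ∈ univ.filter (fun s : Finset W => H.IsClique (s : Set W)), t ^ #s

lemma filter_isClique_card_eq_cliqueFinset (H : SimpleGraph W) (k : ℕ) :
    {s ∈ univ.filter (fun s : Finset W => H.IsClique (s : Set W)) | #s = k}
      = H.cliqueFinset k := by
  ext s
  simp [mem_cliqueFinset_iff, isNClique_iff]

lemma fPoly_eq_cliqueSum (H : SimpleGraph W) (t : ℝ) : fPoly H t = cliqueSum H t := by
  rw [cliqueSum, ← sum_fiberwise_of_maps_to (g := Finset.card)
    (t := range (Fintype.card W + 1)) fun s _ => mem_range_succ_iff.2 s.card_le_univ]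
  have fiber (k : ℕ) :
      ∑ s ∈ univ.filter (fun s : Finset W => H.IsClique (s : Set W)) with #s = k, t ^ #s
        = #(H.cliqueFinset k) * t ^ k := by
    rw [sum_congr rfl fun s hs => by rw [(mem_filter.1 hs).2], sum_const, nsmul_eq_mul,
      filter_isClique_card_eq_cliqueFinset]
  simp_rw [fiber]
  rw [sum_range_succ', fPoly, add_comm]
  simp [cliqueFinset, isNClique_zero, filter_eq']

end CliqueSum

section Cone

variable {V : Type*} {G : SimpleGraph V} {g : V → ℝ}

variable (G g) in
noncomputable def cone (x : V) (L : Finset (sphereSet G g x)) : Finset V :=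
  insert x (L.map (Function.Embedding.subtype _))

lemma notMem_map_sphereSet (x : V) (L : Finset (sphereSet G g x)) :
    x ∉ L.map (Function.Embedding.subtype _) := by
  simp only [mem_map, Function.Embedding.coe_subtype, not_exists, not_and]
  exact fun y _ hyx => G.ne_of_adj y.2.1 hyx.symm

lemma mem_cone_self (x : V) (L : Finset (sphereSet G g x)) : x ∈ cone G g x L :=
  mem_insert_self x _

lemma card_cone (x : V) (L : Finset (sphereSet G g x)) : #(cone G g x L) = #L + 1 := by
  rw [cone, card_insert_of_notMem (notMem_map_sphereSet x L), card_map]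

lemma isClique_cone_iff (x : V) (L : Finset (sphereSet G g x)) :
    G.IsClique (cone G g x L : Set V)
      ↔ (sphereBelow G g x).IsClique (L : Set (sphereSet G g x)) := by
  rw [cone, coe_insert,
    isClique_insert_of_notMem (by exact_mod_cast notMem_map_sphereSet x L), coe_map,
    sphereBelow, isClique_induce_iff]
  simp only [Function.Embedding.coe_subtype, Set.mem_image, mem_coe, and_iff_left_iff_imp]
  rintro - - ⟨y, -, rfl⟩
  exact y.2.1

lemma lt_of_mem_cone {x y : V} {L : Finset (sphereSet G g x)} (hy : y ∈ cone G g x L)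
    (hyx : y ≠ x) : g y < g x := by
  obtain ⟨z, -, rfl⟩ := mem_map.1 ((mem_insert.1 hy).resolve_left hyx)
  exact z.2.2

lemma cone_injective {x x' : V} {L : Finset (sphereSet G g x)} {L' : Finset (sphereSet G g x')}
    (h : cone G g x L = cone G g x' L') :
    (⟨x, L⟩ : Σ x, Finset (sphereSet G g x)) = ⟨x', L'⟩ := by
  obtain rfl : x = x' := by
    by_contra hne
    exact lt_asymm (lt_of_mem_cone (h ▸ mem_cone_self x L) hne)
      (lt_of_mem_cone (h ▸ mem_cone_self x' L') (Ne.symm hne))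
  have hL := congrArg (erase · x) h
  simp only [cone, erase_insert (notMem_map_sphereSet _ _), map_inj] at hL
  rw [hL]

lemma exists_cone_eq (hg : ∀ ⦃a b : V⦄, G.Adj a b → g a ≠ g b) {s : Finset V}
    (hs : G.IsClique (s : Set V)) (hne : s.Nonempty) :
    ∃ x, ∃ L : Finset (sphereSet G g x), cone G g x L = s := by
  obtain ⟨x, hx, hmax⟩ := s.exists_max_image g hne
  have below : ∀ y ∈ s.erase x, y ∈ sphereSet G g x := by
    intro y hy
    obtain ⟨hyx, hys⟩ := mem_erase.1 hy
    have hadj : G.Adj x y := hs hx hys (Ne.symm hyx)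
    exact ⟨hadj, (hmax y hys).lt_of_ne (hg hadj).symm⟩
  refine ⟨x, (s.erase x).subtype (· ∈ sphereSet G g x), ?_⟩
  rw [cone, subtype_map_of_mem below, insert_erase hx]

lemma cliqueSum_eq_one_add_sum_cliqueSum_sphereBelow [Fintype V]
    (hg : ∀ ⦃a b : V⦄, G.Adj a b → g a ≠ g b) (t : ℝ) :
    cliqueSum G t = 1 + t * ∑ x, cliqueSum (sphereBelow G g x) t := by
  have split : univ.filter (fun s : Finset V => G.IsClique (s : Set V))
      = insert ∅ (univ.filter fun s : Finset V => G.IsClique (s : Set V) ∧ s.Nonempty) := by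
    ext s
    rcases s.eq_empty_or_nonempty with rfl | hs
    · simp
    · simp [hs, hs.ne_empty]
  simp only [cliqueSum, mul_sum]
  rw [split, sum_insert (by simp), card_empty, pow_zero, sum_sigma']
  refine congrArg (1 + ·) (sum_bij (fun p _ => cone G g p.1 p.2) ?_ ?_ ?_ ?_).symm
  · rintro ⟨x, L⟩ hL
    simp only [mem_sigma, mem_filter, mem_univ, true_and] at hL ⊢
    exact ⟨(isClique_cone_iff x L).2 hL, x, mem_cone_self x L⟩
  · rintro ⟨x, L⟩ - ⟨x', L'⟩ - h
    exact cone_injective h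
  · intro s hs
    simp only [mem_filter, mem_univ, true_and] at hs
    obtain ⟨x, L, rfl⟩ := exists_cone_eq hg hs.1 hs.2
    refine ⟨⟨x, L⟩, ?_, rfl⟩
    simpa [mem_sigma] using (isClique_cone_iff x L).1 hs.1
  · rintro ⟨x, L⟩ -
    rw [card_cone, pow_succ']

end Cone

end SimpleGraph

/-- Parametrized Poincaré–Hopf: `f_G(t) = 1 + t ∑_x f_{S_g(x)}(t)` for locally injective `g`. -/
theorem parametrized_poincare_hopf {V : Type*} [Fintype V] (G : SimpleGraph V) (g : V → ℝ)
    (hg : ∀ ⦃a b : V⦄, G.Adj a b → g a ≠ g b) (t : ℝ) :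
    fPoly G t = 1 + t * ∑ x : V, fPoly (sphereBelow G g x) t := by
  simpa only [SimpleGraph.fPoly_eq_cliqueSum] using
    SimpleGraph.cliqueSum_eq_one_add_sum_cliqueSum_sphereBelow hg t
end

section
/- For a finite simple graph G=(V,E) and a locally injective function g:V→ℝ, the Euler characteristic satisfies χ(G) = Σ_{x∈V} i_g(x), where i_g(x) = 1 - χ(S_g(x)). -/
open Finset
open scoped Classical

/-- Euler characteristic `χ(G) = Σ_k (-1)^k f_k` where `f_k` counts cliques on `k+1` vertices. -/
noncomputable def eulerChar {V : Type*} [Fintype V] (G : SimpleGraph V) : ℝ :=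
  ∑ k ∈ Finset.range (Fintype.card V), (-1 : ℝ) ^ k * ((G.cliqueFinset (k + 1)).card : ℝ)

/-!
Since `g` separates adjacent vertices, every clique of `G` has a unique vertex at which `g` is
largest, and removing that vertex `x` leaves a clique of `S_g(x)`. Hence the number of cliques of
`G` on `k + 1` vertices is `Σ_x f_{k-1}(S_g(x))`, where the empty clique gives `f_{-1} = 1`, and
taking the alternating sum over `k` yields `χ(G) = Σ_x (1 - χ(S_g(x)))`.
-/

namespace SimpleGraph

theorem IsClique.existsUnique_forall_le {V : Type*} {G : SimpleGraph V} {g : V → ℝ}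
    (hg : ∀ ⦃a b : V⦄, G.Adj a b → g a ≠ g b) {K : Finset V} (hK : G.IsClique K)
    (hne : K.Nonempty) : ∃! x, x ∈ K ∧ ∀ y ∈ K, g y ≤ g x := by
  obtain ⟨x, hx, hmax⟩ := K.exists_max_image g hne
  refine ⟨x, ⟨hx, hmax⟩, fun x' ⟨hx', hmax'⟩ => ?_⟩
  by_contra hxx'
  exact hg (hK hx' hx hxx') (le_antisymm (hmax x' hx') (hmax' x hx))

variable {V : Type*} [Fintype V] [DecidableEq V] (G : SimpleGraph V) [DecidableRel G.Adj]

theorem card_cliqueFinset_induce (s : Set V) [Fintype s] [DecidableRel (G.induce s).Adj]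
    (n : ℕ) : #((G.induce s).cliqueFinset n) = #{t ∈ G.cliqueFinset n | ↑t ⊆ s} := by
  refine card_nbij' (·.map (.subtype _)) (·.subtype (· ∈ s)) ?_ ?_ ?_ ?_
  · intro t ht
    simp only [mem_coe, mem_filter, mem_cliqueFinset_iff] at ht ⊢
    exact ⟨(G.isNClique_induce_iff s t n).1 ht, by simp⟩
  · intro t ht
    simp only [mem_coe, mem_filter, mem_cliqueFinset_iff] at ht ⊢
    rw [isNClique_induce_iff, subtype_map_of_mem ht.2]
    exact ht.1
  · intro t _
    ext ⟨a, ha⟩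
    simp [ha]
  · intro t ht
    exact subtype_map_of_mem (mem_filter.1 ht).2

theorem eulerChar_eq_sum_range {N : ℕ} (hN : Fintype.card V ≤ N) :
    eulerChar G = ∑ k ∈ range N, (-1 : ℝ) ^ k * #(G.cliqueFinset (k + 1)) := by
  have hdef : eulerChar G
      = ∑ k ∈ range (Fintype.card V), (-1 : ℝ) ^ k * #(G.cliqueFinset (k + 1)) := by
    unfold eulerChar
    congr! -- `eulerChar` uses the classical decidability instances
  rw [hdef]
  refine sum_subset (range_subset_range.2 hN) fun k _ hk => ?_
  rw [mem_range, not_lt] at hk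
  rw [cliqueFinset_eq_empty_iff.2 (cliqueFree_of_card_lt (by omega)), card_empty,
    Nat.cast_zero, mul_zero]

theorem one_sub_eulerChar_eq_sum_range {N : ℕ} (hN : Fintype.card V < N) :
    1 - eulerChar G = ∑ k ∈ range N, (-1 : ℝ) ^ k * #(G.cliqueFinset k) := by
  obtain ⟨M, rfl⟩ : ∃ M, N = M + 1 := ⟨N - 1, by omega⟩
  have hzero : #(G.cliqueFinset 0) = 1 := card_eq_one.2 ⟨∅, by ext; simp⟩
  rw [sum_range_succ', eulerChar_eq_sum_range G (Nat.le_of_lt_succ hN), hzero]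
  simp only [pow_succ, mul_neg_one, neg_mul, sum_neg_distrib, pow_zero, one_mul, Nat.cast_one]
  ring

variable {G} {g : V → ℝ}

theorem card_filter_forall_le_cliqueFinset_succ (hg : ∀ ⦃a b : V⦄, G.Adj a b → g a ≠ g b)
    (n : ℕ) (x : V) :
    #{K ∈ G.cliqueFinset (n + 1) | x ∈ K ∧ ∀ y ∈ K, g y ≤ g x}
      = #{t ∈ G.cliqueFinset n | ↑t ⊆ sphereSet G g x} := by
  have hx : x ∉ sphereSet G g x := fun h => lt_irrefl _ h.2
  refine card_nbij' (·.erase x) (insert x ·) ?_ ?_ ?_ ?_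
  · intro K hK
    simp only [mem_coe, mem_filter, mem_cliqueFinset_iff] at hK ⊢
    obtain ⟨hKc, hxK, hmax⟩ := hK
    refine ⟨hKc.erase_of_mem hxK, fun y hy => ?_⟩
    obtain ⟨hyx, hyK⟩ := mem_erase.1 hy
    have hadj : G.Adj x y := hKc.isClique hxK hyK (Ne.symm hyx)
    exact ⟨hadj, (hmax y hyK).lt_of_ne (hg hadj).symm⟩
  · intro t ht
    simp only [mem_coe, mem_filter, mem_cliqueFinset_iff] at ht ⊢
    obtain ⟨htc, hts⟩ := ht
    refine ⟨htc.insert fun y hy => (hts hy).1, mem_insert_self x t, fun y hy => ?_⟩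
    rcases mem_insert.1 hy with rfl | hy
    · exact le_rfl
    · exact (hts hy).2.le
  · intro K hK
    exact insert_erase (mem_filter.1 hK).2.1
  · intro t ht
    exact erase_insert fun hxt => hx ((mem_filter.1 ht).2 hxt)

theorem card_cliqueFinset_succ_eq_sum_sphereBelow (hg : ∀ ⦃a b : V⦄, G.Adj a b → g a ≠ g b)
    (n : ℕ) : #(G.cliqueFinset (n + 1)) = ∑ x, #((sphereBelow G g x).cliqueFinset n) := by
  calc #(G.cliqueFinset (n + 1))
      = ∑ x, #{K ∈ G.cliqueFinset (n + 1) | x ∈ K ∧ ∀ y ∈ K, g y ≤ g x} := by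
        simp only [card_filter]
        rw [sum_comm, card_eq_sum_ones]
        refine sum_congr rfl fun K hK => ?_
        rw [mem_cliqueFinset_iff] at hK
        have hne : K.Nonempty := by rw [← card_pos, hK.card_eq]; omega
        obtain ⟨x, hx, huniq⟩ := hK.isClique.existsUnique_forall_le hg hne
        rw [sum_boole, Nat.cast_id, eq_comm, card_eq_one]
        exact ⟨x, by ext y; simpa using ⟨fun hy => huniq y hy, fun h => h ▸ hx⟩⟩
    _ = ∑ x, #((sphereBelow G g x).cliqueFinset n) := by
        refine sum_congr rfl fun x _ => ?_
        rw [card_filter_forall_le_cliqueFinset_succ hg, sphereBelow]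
        -- `convert` reconciles the decidability instances of the two sides
        convert (card_cliqueFinset_induce G (sphereSet G g x) n).symm

end SimpleGraph

theorem card_sphereSet_lt {V : Type*} [Fintype V] (G : SimpleGraph V) (g : V → ℝ) (x : V)
    [Fintype (sphereSet G g x)] : Fintype.card (sphereSet G g x) < Fintype.card V :=
  Fintype.card_subtype_lt (p := (· ∈ sphereSet G g x)) fun hx => lt_irrefl _ hx.2

/-- Poincaré–Hopf: `χ(G) = Σ_x i_g(x)` with `i_g(x) = 1 - χ(S_g(x))`. -/
theorem poincare_hopf {V : Type*} [Fintype V] (G : SimpleGraph V) (g : V → ℝ)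
    (hg : ∀ ⦃a b : V⦄, G.Adj a b → g a ≠ g b) :
    eulerChar G = ∑ x : V, (1 - eulerChar (sphereBelow G g x)) := by
  open SimpleGraph in
  calc eulerChar G
      = ∑ k ∈ range (Fintype.card V), (-1 : ℝ) ^ k *
          ∑ x, (#((sphereBelow G g x).cliqueFinset k) : ℝ) := by
        simp only [eulerChar_eq_sum_range G le_rfl, card_cliqueFinset_succ_eq_sum_sphereBelow hg,
          Nat.cast_sum]
    _ = ∑ x, ∑ k ∈ range (Fintype.card V), (-1 : ℝ) ^ k *
          #((sphereBelow G g x).cliqueFinset k) := by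
        simp only [mul_sum]
        exact sum_comm
    _ = ∑ x, (1 - eulerChar (sphereBelow G g x)) := by
        refine sum_congr rfl fun x _ => ?_
        rw [one_sub_eulerChar_eq_sum_range _ (card_sphereSet_lt G g x)]
end

section
/- For the cycle graph C_n with n ≥ 4 and any locally injective function g on its vertices, the identity 1 + n t + n t² = 1 + t·Σ_{x} f_{S_g(x)}(t) holds, where each vertex x is a local minimum with index polynomial 1, a local maximum with index polynomial 1+2t, or a regular point with index polynomial 1+t, and the number of local maxima equals the number of local minima. -/
open Finset
open scoped Classical

/-- The cycle graph `C_n`, with vertex set `ZMod n`, `i` adjacent to `i ± 1`. -/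
def cycleG (n : ℕ) : SimpleGraph (ZMod n) :=
  SimpleGraph.fromRel (fun a b => a = b + 1)

/-- `x` is a local minimum of `g` on `C_n`. -/
def IsLocalMin' (n : ℕ) (g : ZMod n → ℝ) (x : ZMod n) : Prop :=
  g x < g (x + 1) ∧ g x < g (x - 1)

/-- `x` is a local maximum of `g` on `C_n`. -/
def IsLocalMax' (n : ℕ) (g : ZMod n → ℝ) (x : ZMod n) : Prop :=
  g (x + 1) < g x ∧ g (x - 1) < g x

/-!
Every vertex `x` of `C_n` has at most the two neighbours `x ± 1`, and for `n ≥ 4` these are not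
adjacent, so `S_g(x)` is edgeless and `f_{S_g(x)}(t) = 1 + |S_g(x)| t`. Since `g` separates
adjacent vertices, each edge lies in exactly one `S_g(x)`, namely at its higher endpoint, so
`Σ_x |S_g(x)| = |E| = n`; this gives the identity. The same count reads
`Σ_x (|S_g(x)| - 1) = 0`, and `|S_g(x)| - 1` is `1` at a maximum, `-1` at a minimum and `0`
otherwise.
-/

lemma ZMod.natCast_ne_zero_of_pos_of_lt {n k : ℕ} (hk : 0 < k) (hkn : k < n) :
    (k : ZMod n) ≠ 0 := by
  rw [Ne, ZMod.natCast_eq_zero_iff]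
  exact fun h => absurd (Nat.le_of_dvd hk h) (by omega)

lemma one_ne_zero_of_two_ne_zero {R : Type*} [Semiring R] (h2 : (2 : R) ≠ 0) : (1 : R) ≠ 0 :=
  fun h => h2 (by rw [← one_add_one_eq_two, h, add_zero])

lemma sub_one_ne_add_one {R : Type*} [CommRing R] (h2 : (2 : R) ≠ 0) (x : R) : x - 1 ≠ x + 1 :=
  fun h => h2 (by linear_combination -h)

lemma card_cliqueFinset_one {V : Type*} [Fintype V] (G : SimpleGraph V) :
    #(G.cliqueFinset 1) = Fintype.card V := by
  have : G.cliqueFinset 1 = univ.image singleton := by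
    ext s
    simp [SimpleGraph.isNClique_one, eq_comm]
  rw [this, card_image_of_injective _ singleton_injective, card_univ]

lemma fPoly_of_forall_not_adj {V : Type*} [Fintype V] (G : SimpleGraph V)
    (h : ∀ a b, ¬ G.Adj a b) (t : ℝ) : fPoly G t = 1 + Fintype.card V * t := by
  have hfree (k : ℕ) : G.CliqueFree (k + 2) :=
    (SimpleGraph.cliqueFree_two.2 (by ext a b; simp [h])).mono (by omega)
  rw [fPoly]
  cases hV : Fintype.card V with
  | zero => simp
  | succ m =>
    rw [sum_range_succ', card_cliqueFinset_one, hV]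
    simp [SimpleGraph.cliqueFinset_eq_empty_iff.2 (hfree _)]

section Sphere

variable {V : Type*} [Fintype V] (G : SimpleGraph V) (g : V → ℝ)

lemma card_sphereSet (x : V) :
    Fintype.card (sphereSet G g x) = #{y | G.Adj x y ∧ g y < g x} := by
  rw [← Fintype.card_subtype]
  exact Fintype.card_congr (Equiv.refl _)

lemma sum_card_sphereSet_eq_card_edgeFinset (hg : ∀ ⦃a b⦄, G.Adj a b → g a ≠ g b) :
    ∑ x, Fintype.card (sphereSet G g x) = #G.edgeFinset := by
  have hswap : ∑ x, #{y | G.Adj x y ∧ g y < g x} = ∑ x, #{y | G.Adj x y ∧ g x < g y} := by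
    simp only [card_filter]
    rw [sum_comm]
    simp only [G.adj_comm]
  have hsplit (x : V) :
      #{y | G.Adj x y ∧ g y < g x} + #{y | G.Adj x y ∧ g x < g y} = G.degree x := by
    have h := card_filter_add_card_filter_not (s := {y | G.Adj x y}) (fun y => g y < g x)
    rw [filter_filter, filter_filter] at h
    rw [← G.card_neighborFinset_eq_degree, G.neighborFinset_eq_filter, ← h]
    congr 2
    exact filter_congr fun y _ =>
      and_congr_right fun hxy => (not_lt.trans (hg hxy).le_iff_lt).symm
  have := G.sum_degrees_eq_twice_card_edges
  simp only [card_sphereSet, ← hsplit, sum_add_distrib, ← hswap] at this ⊢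
  omega

end Sphere

section Cycle

variable {n : ℕ}

lemma cycleG_adj (h1 : (1 : ZMod n) ≠ 0) (x y : ZMod n) :
    (cycleG n).Adj x y ↔ y = x - 1 ∨ y = x + 1 := by
  simp only [cycleG, SimpleGraph.fromRel_adj]
  constructor
  · rintro ⟨-, h | h⟩
    · exact Or.inl (by rw [h]; ring)
    · exact Or.inr h
  · rintro (rfl | rfl)
    · exact ⟨fun h => h1 (by linear_combination h), Or.inl (by ring)⟩
    · exact ⟨fun h => h1 (by linear_combination -h), Or.inr rfl⟩

lemma cycleG_neighborFinset [NeZero n] (h2 : (2 : ZMod n) ≠ 0) (x : ZMod n) :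
    (cycleG n).neighborFinset x = {x - 1, x + 1} := by
  ext y
  simp [cycleG_adj (one_ne_zero_of_two_ne_zero h2)]

lemma card_edgeFinset_cycleG [NeZero n] (h2 : (2 : ZMod n) ≠ 0) :
    #(cycleG n).edgeFinset = n := by
  have hdeg (x : ZMod n) : (cycleG n).degree x = 2 := by
    rw [← SimpleGraph.card_neighborFinset_eq_degree, cycleG_neighborFinset h2,
      card_pair (sub_one_ne_add_one h2 x)]
  have := (cycleG n).sum_degrees_eq_twice_card_edges
  simp only [hdeg, sum_const, card_univ, ZMod.card, smul_eq_mul] at this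
  omega

lemma cycleG_sphereBelow_not_adj (h1 : (1 : ZMod n) ≠ 0) (h3 : (3 : ZMod n) ≠ 0)
    (g : ZMod n → ℝ) (x : ZMod n) (a b : sphereSet (cycleG n) g x) :
    ¬ (sphereBelow (cycleG n) g x).Adj a b := by
  obtain ⟨a, ha, -⟩ := a
  obtain ⟨b, hb, -⟩ := b
  show ¬ (cycleG n).Adj a b
  rw [cycleG_adj h1] at ha hb ⊢
  rcases ha with rfl | rfl <;> rcases hb with rfl | rfl
  all_goals
    rintro (h | h) <;>
    first
      | exact h1 (by linear_combination h)
      | exact h1 (by linear_combination -h)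
      | exact h3 (by linear_combination h)
      | exact h3 (by linear_combination -h)

lemma card_sphereSet_cycleG [NeZero n] (h2 : (2 : ZMod n) ≠ 0) (g : ZMod n → ℝ) (x : ZMod n) :
    Fintype.card (sphereSet (cycleG n) g x)
      = (if g (x - 1) < g x then 1 else 0) + (if g (x + 1) < g x then 1 else 0) := by
  rw [card_sphereSet, ← sum_pair (f := fun y => if g y < g x then 1 else 0)
    (sub_one_ne_add_one h2 x), ← card_filter]
  congr 1
  ext y
  simp [cycleG_adj (one_ne_zero_of_two_ne_zero h2)]

lemma fPoly_sphereBelow_cycleG [NeZero n] (h1 : (1 : ZMod n) ≠ 0) (h3 : (3 : ZMod n) ≠ 0)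
    (g : ZMod n → ℝ) (x : ZMod n) (t : ℝ) :
    fPoly (sphereBelow (cycleG n) g x) t = 1 + Fintype.card (sphereSet (cycleG n) g x) * t :=
  fPoly_of_forall_not_adj _ (cycleG_sphereBelow_not_adj h1 h3 g x) t

variable {g : ZMod n → ℝ} {x : ZMod n}

lemma card_sphereSet_cycleG_of_isLocalMin [NeZero n] (h2 : (2 : ZMod n) ≠ 0)
    (hx : IsLocalMin' n g x) :
    Fintype.card (sphereSet (cycleG n) g x) = 0 := by
  simp [card_sphereSet_cycleG h2, lt_asymm hx.1, lt_asymm hx.2]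

lemma card_sphereSet_cycleG_of_isLocalMax [NeZero n] (h2 : (2 : ZMod n) ≠ 0)
    (hx : IsLocalMax' n g x) :
    Fintype.card (sphereSet (cycleG n) g x) = 2 := by
  simp [card_sphereSet_cycleG h2, hx.1, hx.2]

lemma card_sphereSet_cycleG_of_not_isLocalMin_of_not_isLocalMax [NeZero n]
    (h2 : (2 : ZMod n) ≠ 0)     (hg : ∀ ⦃a b : ZMod n⦄, (cycleG n).Adj a b → g a ≠ g b)
    (hmin : ¬ IsLocalMin' n g x) (hmax : ¬ IsLocalMax' n g x) :
    Fintype.card (sphereSet (cycleG n) g x) = 1 := by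
  have hadj := cycleG_adj (one_ne_zero_of_two_ne_zero h2) x
  have hprev := hg ((hadj (x - 1)).2 (Or.inl rfl))
  have hnext := hg ((hadj (x + 1)).2 (Or.inr rfl))
  unfold IsLocalMin' at hmin
  unfold IsLocalMax' at hmax
  rw [card_sphereSet_cycleG h2]
  split_ifs <;> grind

lemma sum_card_sphereSet_cycleG [NeZero n] (h2 : (2 : ZMod n) ≠ 0)
    (hg : ∀ ⦃a b : ZMod n⦄, (cycleG n).Adj a b → g a ≠ g b) :
    ∑ x, Fintype.card (sphereSet (cycleG n) g x) = n :=
  (sum_card_sphereSet_eq_card_edgeFinset _ g hg).trans (card_edgeFinset_cycleG h2)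

lemma card_filter_isLocalMax'_eq_card_filter_isLocalMin' [NeZero n] (h2 : (2 : ZMod n) ≠ 0)
    (hg : ∀ ⦃a b : ZMod n⦄, (cycleG n).Adj a b → g a ≠ g b) :
    #{x | IsLocalMax' n g x} = #{x | IsLocalMin' n g x} := by
  have hpt (x : ZMod n) : (Fintype.card (sphereSet (cycleG n) g x) : ℤ)
      = 1 + (if IsLocalMax' n g x then 1 else 0) - (if IsLocalMin' n g x then 1 else 0) := by
    by_cases hmin : IsLocalMin' n g x
    · have hmax : ¬ IsLocalMax' n g x := fun hmax => lt_asymm hmin.1 hmax.1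
      simp [hmin, hmax, card_sphereSet_cycleG_of_isLocalMin h2 hmin]
    by_cases hmax : IsLocalMax' n g x
    · simp [hmin, hmax, card_sphereSet_cycleG_of_isLocalMax h2 hmax]
    · simp [hmin, hmax,
        card_sphereSet_cycleG_of_not_isLocalMin_of_not_isLocalMax h2 hg hmin hmax]
  have hsum : ∑ x, (Fintype.card (sphereSet (cycleG n) g x) : ℤ) = n := by
    exact_mod_cast sum_card_sphereSet_cycleG h2 hg
  simp only [hpt, sum_sub_distrib, sum_add_distrib, sum_boole, sum_const, card_univ,
    ZMod.card, nsmul_one] at hsum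
  omega

end Cycle

/-- Poincaré–Hopf on the cycle graph `C_n`, `n ≥ 4`: the identity
`1 + n t + n t² = 1 + t Σ_x f_{S_g(x)}(t)` holds, each vertex is a local minimum with
index polynomial `1`, a local maximum with index polynomial `1+2t`, or a regular point
with index polynomial `1+t`, and the numbers of local maxima and minima agree. -/
theorem cycle_poincare_hopf (n : ℕ) [NeZero n] (hn : 4 ≤ n) (g : ZMod n → ℝ)
    (hg : ∀ ⦃a b : ZMod n⦄, (cycleG n).Adj a b → g a ≠ g b) (t : ℝ) :
    ((1 + n * t + n * t ^ 2 : ℝ) = 1 + t * ∑ x : ZMod n, fPoly (sphereBelow (cycleG n) g x) t)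
    ∧ (∀ x : ZMod n,
        (IsLocalMin' n g x → fPoly (sphereBelow (cycleG n) g x) t = 1) ∧
        (IsLocalMax' n g x → fPoly (sphereBelow (cycleG n) g x) t = 1 + 2 * t) ∧
        (¬ IsLocalMin' n g x → ¬ IsLocalMax' n g x →
          fPoly (sphereBelow (cycleG n) g x) t = 1 + t))
    ∧ (Finset.univ.filter (IsLocalMax' n g)).card
        = (Finset.univ.filter (IsLocalMin' n g)).card := by
  have h2 : (2 : ZMod n) ≠ 0 := by
    exact_mod_cast ZMod.natCast_ne_zero_of_pos_of_lt two_pos (by omega)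
  have h3 : (3 : ZMod n) ≠ 0 := by
    exact_mod_cast ZMod.natCast_ne_zero_of_pos_of_lt three_pos (by omega)
  have h1 := one_ne_zero_of_two_ne_zero h2
  have hsum : ∑ x, (Fintype.card (sphereSet (cycleG n) g x) : ℝ) = n := by
    exact_mod_cast sum_card_sphereSet_cycleG h2 hg
  simp only [fPoly_sphereBelow_cycleG h1 h3]
  refine ⟨?_, fun x => ⟨fun hmin => ?_, fun hmax => ?_, fun hmin hmax => ?_⟩,
    card_filter_isLocalMax'_eq_card_filter_isLocalMin' h2 hg⟩
  · rw [sum_add_distrib, ← sum_mul, hsum, sum_const, card_univ, ZMod.card, nsmul_one]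
    ring
  · simp [card_sphereSet_cycleG_of_isLocalMin h2 hmin]
  · simp [card_sphereSet_cycleG_of_isLocalMax h2 hmax]
  · simp [card_sphereSet_cycleG_of_not_isLocalMin_of_not_isLocalMax h2 hg hmin hmax]
end

section
/- In the Barycentric refinement G₁ of a finite simple graph G with dimension function g(x)=dim(x), for a clique x of G with |x| = m vertices, the set of vertices of G₁ adjacent to x with smaller dimension is the set of proper nonempty subsets of x, and the f-polynomial of the induced subgraph S_g(x) satisfies f_{S_g(x)}(-1) = 1 - (1 + (-1)^m), so the Poincaré-Hopf index i_g(x) = 1 - χ(S_g(x)) equals (-1)^{m+1} = (-1)^{dim(x)}. -/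
open Finset
open scoped Classical

/-- Vertices of the Barycentric refinement: the nonempty cliques of `G`. -/
def BaryVert {V : Type*} (G : SimpleGraph V) : Type _ :=
  {s : Finset V // s.Nonempty ∧ G.IsClique (s : Set V)}

/-- The Barycentric refinement `G₁`. -/
def baryRefinement {V : Type*} (G : SimpleGraph V) : SimpleGraph (BaryVert G) :=
  SimpleGraph.fromRel (fun a b => a.1 ⊂ b.1)

noncomputable instance {V : Type*} [Fintype V] (G : SimpleGraph V) : Fintype (BaryVert G) := by
  unfold BaryVert; infer_instance

set_option linter.unusedSectionVars false

section Chains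
variable {V : Type*} [DecidableEq V]

variable {V : Type*} [DecidableEq V]

def properSubsets (x : Finset V) : Finset (Finset V) := (x.powerset.erase x).erase ∅

lemma mem_properSubsets {x s : Finset V} :
    s ∈ properSubsets x ↔ s.Nonempty ∧ s ⊂ x := by
  simp only [properSubsets, mem_erase, mem_powerset, nonempty_iff_ne_empty]
  constructor
  · rintro ⟨h0, h1, h2⟩; exact ⟨h0, ssubset_of_subset_of_ne h2 h1⟩
  · rintro ⟨h0, h1⟩; exact ⟨h0, h1.ne, h1.subset⟩

noncomputable def chainFinset (x : Finset V) (n : ℕ) : Finset (Finset (Finset V)) :=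
  x.powerset.powerset.filter fun c =>
    c.card = n ∧ (∀ s ∈ c, s.Nonempty ∧ s ⊂ x) ∧ (∀ s ∈ c, ∀ t ∈ c, s ⊆ t ∨ t ⊆ s)

lemma mem_chainFinset {x : Finset V} {n : ℕ} {c : Finset (Finset V)} :
    c ∈ chainFinset x n ↔
      c.card = n ∧ (∀ s ∈ c, s.Nonempty ∧ s ⊂ x) ∧ (∀ s ∈ c, ∀ t ∈ c, s ⊆ t ∨ t ⊆ s) := by
  simp only [chainFinset, mem_filter, mem_powerset, and_iff_right_iff_imp]
  rintro ⟨-, h, -⟩ s hs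
  exact mem_powerset.2 (h s hs).2.subset

lemma chainFinset_zero (x : Finset V) : chainFinset x 0 = {∅} := by
  ext c
  simp only [mem_chainFinset, mem_singleton, card_eq_zero]
  constructor
  · rintro ⟨h, -⟩; exact h
  · rintro rfl; simp

lemma sup_mem_chain : ∀ (c : Finset (Finset V)), c.Nonempty →
    (∀ s ∈ c, ∀ t ∈ c, s ⊆ t ∨ t ⊆ s) → c.sup id ∈ c := by
  intro c
  induction c using Finset.induction_on with
  | empty => intro h; exact absurd rfl h.ne_empty
  | @insert a t hat ih =>
    intro _ hc
    rw [Finset.sup_insert]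
    simp only [id_eq]
    rcases t.eq_empty_or_nonempty with rfl | hne
    · simp
    · have hsub : ∀ s ∈ t, ∀ u ∈ t, s ⊆ u ∨ u ⊆ s := fun s hs u hu =>
        hc s (mem_insert_of_mem hs) u (mem_insert_of_mem hu)
      have hmem : t.sup id ∈ t := ih hne hsub
      rcases hc a (mem_insert_self a t) (t.sup id) (mem_insert_of_mem hmem) with h | h
      · have h' : a ⊔ t.sup id = t.sup id := sup_eq_right.2 h
        rw [h']; exact mem_insert_of_mem hmem
      · have h' : a ⊔ t.sup id = a := sup_eq_left.2 h
        rw [h']; exact mem_insert_self a t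

lemma chain_card_succ (x : Finset V) (n : ℕ) :
    (chainFinset x (n + 1)).card = ∑ s ∈ properSubsets x, (chainFinset s n).card := by
  rw [← Finset.card_sigma]
  refine Finset.card_bij' (fun c _ => ⟨c.sup id, c.erase (c.sup id)⟩)
    (fun p _ => insert p.1 p.2) ?_ ?_ ?_ ?_
  · -- hi
    intro c hc
    rw [mem_chainFinset] at hc
    obtain ⟨hcard, hprop, hcomp⟩ := hc
    have hne : c.Nonempty := card_pos.1 (by omega)
    have hsup : c.sup id ∈ c := sup_mem_chain c hne hcomp
    rw [Finset.mem_sigma]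
    refine ⟨mem_properSubsets.2 ⟨(hprop _ hsup).1, (hprop _ hsup).2⟩, ?_⟩
    rw [mem_chainFinset]
    refine ⟨by rw [card_erase_of_mem hsup, hcard]; rfl, ?_, ?_⟩
    · intro s hs
      have hsc := mem_of_mem_erase hs
      refine ⟨(hprop s hsc).1, ?_⟩
      exact lt_of_le_of_ne (Finset.le_sup (f := id) hsc) (ne_of_mem_erase hs)
    · intro s hs t ht
      exact hcomp s (mem_of_mem_erase hs) t (mem_of_mem_erase ht)
  · -- hj
    rintro ⟨s, d⟩ hp
    rw [Finset.mem_sigma] at hp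
    obtain ⟨hs, hd⟩ := hp
    rw [mem_properSubsets] at hs
    rw [mem_chainFinset] at hd
    dsimp only at *
    obtain ⟨hdcard, hdprop, hdcomp⟩ := hd
    have hsd : s ∉ d := fun h => (hdprop s h).2.ne rfl
    rw [mem_chainFinset]
    refine ⟨by rw [card_insert_of_notMem hsd, hdcard], ?_, ?_⟩
    · intro t ht
      rcases mem_insert.1 ht with rfl | ht'
      · exact hs
      · exact ⟨(hdprop t ht').1, (hdprop t ht').2.trans hs.2⟩
    · intro a ha b hb
      rcases mem_insert.1 ha with rfl | ha' <;> rcases mem_insert.1 hb with rfl | hb'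
      · exact Or.inl subset_rfl
      · exact Or.inr (hdprop b hb').2.subset
      · exact Or.inl (hdprop a ha').2.subset
      · exact hdcomp a ha' b hb'
  · -- left inverse
    intro c hc
    rw [mem_chainFinset] at hc
    obtain ⟨hcard, hprop, hcomp⟩ := hc
    have hne : c.Nonempty := card_pos.1 (by omega)
    dsimp only
    exact Finset.insert_erase (sup_mem_chain c hne hcomp)
  · -- right inverse
    rintro ⟨s, d⟩ hp
    rw [Finset.mem_sigma] at hp
    obtain ⟨hs, hd⟩ := hp
    rw [mem_properSubsets] at hs
    rw [mem_chainFinset] at hd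
    dsimp only at *
    obtain ⟨hdcard, hdprop, hdcomp⟩ := hd
    have hsd : s ∉ d := fun h => (hdprop s h).2.ne rfl
    have h1 : (insert s d).sup id = s := by
      rw [Finset.sup_insert]
      exact sup_eq_left.2 (Finset.sup_le fun t ht => (hdprop t ht).2.subset)
    have h2 : (insert s d).erase ((insert s d).sup id) = d := by
      rw [h1]; exact Finset.erase_insert hsd
    exact Sigma.ext h1 (heq_of_eq_of_heq h2 HEq.rfl)

lemma sum_neg_one_pow_powerset (x : Finset V) (hx : x.Nonempty) :
    ∑ s ∈ x.powerset, (-1 : ℝ) ^ s.card = 0 := by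
  have h0 := Finset.sum_powerset_neg_one_pow_card_of_nonempty (x := x) hx
  have h1 : ((∑ m ∈ x.powerset, (-1 : ℤ) ^ m.card : ℤ) : ℝ) = 0 := by rw [h0]; norm_num
  rw [← h1]
  push_cast
  rfl

lemma sum_neg_one_pow_properSubsets (x : Finset V) (hx : x.Nonempty) :
    ∑ s ∈ properSubsets x, (-1 : ℝ) ^ s.card = -1 - (-1 : ℝ) ^ x.card := by
  have hxp : x ∈ x.powerset := mem_powerset_self x
  have hep : (∅ : Finset V) ∈ x.powerset.erase x := by
    rw [mem_erase]
    exact ⟨fun h => hx.ne_empty h.symm, empty_mem_powerset x⟩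
  have e1 := Finset.add_sum_erase x.powerset (fun s => (-1 : ℝ) ^ s.card) hxp
  have e2 := Finset.add_sum_erase (x.powerset.erase x) (fun s => (-1 : ℝ) ^ s.card) hep
  rw [sum_neg_one_pow_powerset x hx] at e1
  simp only [card_empty, pow_zero] at e2
  unfold properSubsets
  linarith

lemma chi_chain : ∀ (N : ℕ) (x : Finset V), x.Nonempty → x.card - 1 ≤ N →
    ∑ k ∈ Finset.range N, (-1 : ℝ) ^ k * ((chainFinset x (k + 1)).card : ℝ)
      = 1 + (-1 : ℝ) ^ x.card := by
  intro N
  induction N with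
  | zero =>
    intro x hx hN
    have h1 : x.card = 1 := by have := hx.card_pos; omega
    simp [h1]
  | succ N ih =>
    intro x hx hN
    have hcount : ∀ s ∈ properSubsets x,
        ∑ k ∈ Finset.range N, (-1 : ℝ) ^ k * ((chainFinset s (k + 1)).card : ℝ)
          = 1 + (-1 : ℝ) ^ s.card := by
      intro s hs
      rw [mem_properSubsets] at hs
      have hlt : s.card < x.card := card_lt_card hs.2
      exact ih s hs.1 (by omega)
    have hc1 : ((chainFinset x 1).card : ℝ) = ∑ s ∈ properSubsets x, (1 : ℝ) := by
      rw [chain_card_succ x 0]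
      push_cast
      refine Finset.sum_congr rfl fun s _ => ?_
      rw [chainFinset_zero]
      simp
    have hmain : ∑ k ∈ Finset.range N,
          (-1 : ℝ) ^ (k + 1) * ((chainFinset x (k + 1 + 1)).card : ℝ)
        = ∑ s ∈ properSubsets x, (-(1 + (-1 : ℝ) ^ s.card)) := by
      calc ∑ k ∈ Finset.range N, (-1 : ℝ) ^ (k + 1) * ((chainFinset x (k + 1 + 1)).card : ℝ)
          = ∑ k ∈ Finset.range N, ∑ s ∈ properSubsets x,
              (-1 : ℝ) ^ (k + 1) * ((chainFinset s (k + 1)).card : ℝ) := by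
            refine Finset.sum_congr rfl fun k _ => ?_
            rw [chain_card_succ x (k + 1)]
            push_cast
            rw [Finset.mul_sum]
        _ = ∑ s ∈ properSubsets x, ∑ k ∈ Finset.range N,
              (-1 : ℝ) ^ (k + 1) * ((chainFinset s (k + 1)).card : ℝ) := Finset.sum_comm
        _ = ∑ s ∈ properSubsets x, (-(1 + (-1 : ℝ) ^ s.card)) := by
            refine Finset.sum_congr rfl fun s hs => ?_
            rw [← hcount s hs, ← Finset.sum_neg_distrib]
            refine Finset.sum_congr rfl fun k _ => ?_
            ring
    rw [Finset.sum_range_succ', hmain, hc1]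
    rw [pow_zero, one_mul, ← Finset.sum_add_distrib]
    have : ∀ s ∈ properSubsets x, (-(1 + (-1 : ℝ) ^ s.card) + 1) = -((-1 : ℝ) ^ s.card) := by
      intro s _; ring
    rw [Finset.sum_congr rfl this, Finset.sum_neg_distrib,
      sum_neg_one_pow_properSubsets x hx]
    ring

end Chains

section Bridge
variable {V : Type*} [Fintype V] (G : SimpleGraph V) (x : BaryVert G)

variable {V : Type*} [Fintype V] (G : SimpleGraph V) (x : BaryVert G)

lemma mem_sphereSet_iff (y : BaryVert G) :
    y ∈ sphereSet (baryRefinement G) (fun z => (z.1.card : ℝ)) x ↔ y.1 ⊂ x.1 := by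
  simp only [sphereSet, Set.mem_setOf_eq, baryRefinement, SimpleGraph.fromRel_adj]
  constructor
  · rintro ⟨⟨hne, h | h⟩, hlt⟩
    · exfalso
      have h1 : x.1.card < y.1.card := card_lt_card h
      have h2 : y.1.card < x.1.card := by exact_mod_cast hlt
      omega
    · exact h
  · intro h
    refine ⟨⟨fun he => h.ne (congrArg Subtype.val he).symm, Or.inr h⟩, ?_⟩
    exact_mod_cast card_lt_card h

private lemma finj : Function.Injective
    (fun y : (sphereSet (baryRefinement G) (fun z => (z.1.card : ℝ)) x) => y.1.1) :=
  fun a b h => Subtype.ext (Subtype.ext h)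

lemma clique_chain_card (n : ℕ)
    {iF : Fintype (sphereSet (baryRefinement G) (fun z => (z.1.card : ℝ)) x)}
    {iD : DecidableEq (sphereSet (baryRefinement G) (fun z => (z.1.card : ℝ)) x)}
    {iR : DecidableRel (sphereBelow (baryRefinement G) (fun z => (z.1.card : ℝ)) x).Adj} :
    (@SimpleGraph.cliqueFinset _ (sphereBelow (baryRefinement G) (fun z => (z.1.card : ℝ)) x)
        iF iD iR n).card
      = (chainFinset x.1 n).card := by
  classical
  refine Finset.card_bij (fun q _ => q.image (fun y => y.1.1)) ?_ ?_ ?_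
  · intro q hq
    rw [SimpleGraph.mem_cliqueFinset_iff] at hq
    obtain ⟨hclique, hcard⟩ := hq
    rw [mem_chainFinset]
    refine ⟨by rw [Finset.card_image_of_injective _ (finj G x), hcard], ?_, ?_⟩
    · intro s hs
      obtain ⟨y, hy, rfl⟩ := Finset.mem_image.1 hs
      exact ⟨y.1.2.1, (mem_sphereSet_iff G x y.1).1 y.2⟩
    · intro s hs t ht
      obtain ⟨y, hy, rfl⟩ := Finset.mem_image.1 hs
      obtain ⟨z, hz, rfl⟩ := Finset.mem_image.1 ht
      by_cases hyz : y = z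
      · subst hyz; exact Or.inl subset_rfl
      · have hadj := hclique (Finset.mem_coe.2 hy) (Finset.mem_coe.2 hz) hyz
        have hadj' : (baryRefinement G).Adj y.1 z.1 := hadj
        simp only [baryRefinement, SimpleGraph.fromRel_adj] at hadj'
        rcases hadj'.2 with h | h
        · exact Or.inl h.subset
        · exact Or.inr h.subset
  · intro q1 h1 q2 h2 he
    exact Finset.image_injective (finj G x) he
  · intro c hc
    rw [mem_chainFinset] at hc
    obtain ⟨hcard, hprop, hcomp⟩ := hc
    set q : Finset (sphereSet (baryRefinement G) (fun z => (z.1.card : ℝ)) x) :=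
      Finset.univ.filter (fun y => y.1.1 ∈ c) with hq
    have himg : q.image (fun y => y.1.1) = c := by
      apply Finset.Subset.antisymm
      · intro s hs
        obtain ⟨y, hy, rfl⟩ := Finset.mem_image.1 hs
        exact (Finset.mem_filter.1 hy).2
      · intro s hs
        have hsx : s ⊂ x.1 := (hprop s hs).2
        have hcl : G.IsClique (s : Set V) := x.2.2.subset (Finset.coe_subset.2 hsx.subset)
        have hne : s.Nonempty := (hprop s hs).1
        have hb : (⟨s, hne, hcl⟩ : BaryVert G) ∈
            sphereSet (baryRefinement G) (fun z => (z.1.card : ℝ)) x :=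
          (mem_sphereSet_iff G x _).2 hsx
        exact Finset.mem_image.2 ⟨⟨⟨s, hne, hcl⟩, hb⟩,
          Finset.mem_filter.2 ⟨Finset.mem_univ _, hs⟩, rfl⟩
    refine ⟨q, ?_, himg⟩
    rw [SimpleGraph.mem_cliqueFinset_iff]
    constructor
    · intro y hy z hz hyz
      have hyc : y.1.1 ∈ c := (Finset.mem_filter.1 (Finset.mem_coe.1 hy)).2
      have hzc : z.1.1 ∈ c := (Finset.mem_filter.1 (Finset.mem_coe.1 hz)).2
      have hne' : y.1.1 ≠ z.1.1 := fun h => hyz (Subtype.ext (Subtype.ext h))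
      have hadj : (baryRefinement G).Adj y.1 z.1 := by
        simp only [baryRefinement, SimpleGraph.fromRel_adj]
        refine ⟨fun h => hne' (congrArg Subtype.val h), ?_⟩
        rcases hcomp _ hyc _ hzc with h | h
        · exact Or.inl (lt_of_le_of_ne h hne')
        · exact Or.inr (lt_of_le_of_ne h hne'.symm)
      exact hadj
    · rw [← hcard, ← himg, Finset.card_image_of_injective _ (finj G x)]

lemma card_sphere_ge
    {iF : Fintype (sphereSet (baryRefinement G) (fun z => (z.1.card : ℝ)) x)} :
    x.1.card - 1 ≤ @Fintype.card (sphereSet (baryRefinement G) (fun z => (z.1.card : ℝ)) x) iF := by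
  rcases le_or_gt x.1.card 1 with h | h
  · omega
  · have key : ∀ v : V, v ∈ x.1 → ({v} : Finset V) ⊂ x.1 := by
      intro v hv
      refine lt_of_le_of_ne (Finset.singleton_subset_iff.2 hv) ?_
      intro he
      rw [← he] at h
      simp at h
    have hf : Function.Injective (fun v : x.1 =>
        (⟨⟨{v.1}, Finset.singleton_nonempty _,
            by rw [Finset.coe_singleton]; exact Set.pairwise_singleton _ _⟩,
          (mem_sphereSet_iff G x _).2 (key v.1 v.2)⟩ :
          (sphereSet (baryRefinement G) (fun z => (z.1.card : ℝ)) x))) := by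
      intro a b hab
      have : ({a.1} : Finset V) = {b.1} := congrArg (fun y => y.1.1) hab
      exact Subtype.ext (Finset.singleton_injective this)
    have h2 := Fintype.card_le_of_injective _ hf
    rw [Fintype.card_coe] at h2
    have hcc : Fintype.card {y // y ∈ sphereSet (baryRefinement G) (fun z => (z.1.card : ℝ)) x}
        = @Fintype.card (sphereSet (baryRefinement G) (fun z => (z.1.card : ℝ)) x) iF :=
      Fintype.card_congr (Equiv.refl _)
    omega

lemma euler_eq :
    eulerChar (sphereBelow (baryRefinement G) (fun z => (z.1.card : ℝ)) x)
      = 1 + (-1 : ℝ) ^ x.1.card := by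
  unfold eulerChar
  rw [← chi_chain (Fintype.card (sphereSet (baryRefinement G) (fun z => (z.1.card : ℝ)) x))
    x.1 x.2.1 (card_sphere_ge G x)]
  exact Finset.sum_congr rfl fun k _ => by rw [clique_chain_card G x (k + 1)]

lemma fPoly_neg_one {W : Type*} [Fintype W] (H : SimpleGraph W) :
    fPoly H (-1) = 1 - eulerChar H := by
  unfold fPoly eulerChar
  rw [sub_eq_add_neg, ← Finset.sum_neg_distrib]
  congr 1
  refine Finset.sum_congr rfl fun k _ => ?_
  ring

end Bridge

/-- In the Barycentric refinement with the dimension function `g(x) = |x|`: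
the vertices of `G₁` adjacent to `x` of smaller dimension are exactly the proper nonempty
subsets of `x`; the f-polynomial of `S_g(x)` at `-1` is `1 - (1 + (-1)^m)`, i.e.
`χ(S_g(x)) = 1 + (-1)^m`; and the Poincaré–Hopf index is
`i_g(x) = 1 - χ(S_g(x)) = (-1)^{m+1} = (-1)^{dim x}`, where `m = |x|`. -/
theorem barycentric_index_polynomial {V : Type*} [Fintype V] (G : SimpleGraph V)
    (x : BaryVert G) (m : ℕ) (hm : x.1.card = m) :
    (∀ y : BaryVert G,
        y ∈ sphereSet (baryRefinement G) (fun z => (z.1.card : ℝ)) x ↔ y.1 ⊂ x.1)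
    ∧ fPoly (sphereBelow (baryRefinement G) (fun z => (z.1.card : ℝ)) x) (-1)
        = 1 - (1 + (-1 : ℝ) ^ m)
    ∧ eulerChar (sphereBelow (baryRefinement G) (fun z => (z.1.card : ℝ)) x)
        = 1 + (-1 : ℝ) ^ m
    ∧ 1 - eulerChar (sphereBelow (baryRefinement G) (fun z => (z.1.card : ℝ)) x)
        = (-1 : ℝ) ^ (m + 1) := by
  subst hm
  have he := euler_eq G x
  refine ⟨mem_sphereSet_iff G x, ?_, ?_, ?_⟩
  · rw [fPoly_neg_one, he]
  · exact he
  · rw [he]; ring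
end

section
/- Let G=(V,E), H=(W,F) be finite simple graphs with locally injective functions g on V and h on W satisfying min(h) > max(g). Let (g,h) denote the combined function on the join G+H. Then for v ∈ V, the index polynomial satisfies i_{v,(g,h)}(t) = i_{v,g}(t), and for w ∈ W, i_{w,(g,h)}(t) = f_G(t)·i_{w,h}(t). -/
open Finset
open scoped Classical

/-- The join `G + H` of two graphs on disjoint vertex sets. -/
def joinG {V W : Type*} (G : SimpleGraph V) (H : SimpleGraph W) : SimpleGraph (V ⊕ W) where
  Adj a b := match a, b with
    | .inl a, .inl b => G.Adj a b
    | .inr a, .inr b => H.Adj a b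
    | _, _ => True
  symm := ⟨by rintro (a | a) (b | b) h <;> first | exact h.symm | trivial⟩
  loopless := ⟨by rintro (a | a) h <;> exact SimpleGraph.irrefl _ h⟩

/-!
Because every value of `h` exceeds every value of `g`, the sub-level sphere of `v ∈ V` in
`G + H` never reaches `W`, so it is `S_g(v)`, while the sub-level sphere of `w ∈ W` contains all
of `V`, so it is the join `G + S_h(w)`. Writing `f_G(t) = ∑ t ^ |x|` over all cliques `x` of `G`
(the empty one included), `f` is multiplicative under joins: the cliques of `G + H` are exactly the
disjoint unions of a clique of `G` and a clique of `H`.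
-/

namespace SimpleGraph

variable {V W : Type*}

lemma cliqueFinset_zero [Fintype V] (G : SimpleGraph V) : G.cliqueFinset 0 = {∅} := by
  ext s
  simp

lemma Iso.eq_map {G : SimpleGraph V} {G' : SimpleGraph W} (e : G ≃g G') :
    G' = G.map e.toEquiv := by
  ext a b
  obtain ⟨a, rfl⟩ := e.surjective a
  obtain ⟨b, rfl⟩ := e.surjective b
  rw [e.map_adj_iff]
  exact (map_adj_apply ..).symm

lemma Iso.card_cliqueFinset_eq [Fintype V] [Fintype W] {G : SimpleGraph V}
    {G' : SimpleGraph W} (e : G ≃g G') (n : ℕ) :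
    #(G'.cliqueFinset n) = #(G.cliqueFinset n) := by
  have hG' := e.eq_map
  generalize e.toEquiv = f at hG'
  subst hG'
  -- `cliqueFinset` on the left still uses the classical `DecidableRel` instance, not the one
  -- `cliqueFinset_map_of_equiv` is stated for.
  convert card_map _ using 2
  convert cliqueFinset_map_of_equiv G f n

end SimpleGraph

lemma isClique_joinG_iff {V W : Type*} (G : SimpleGraph V) (H : SimpleGraph W)
    (u : Finset (V ⊕ W)) :
    (joinG G H).IsClique (u : Set (V ⊕ W)) ↔
      G.IsClique (u.toLeft : Set V) ∧ H.IsClique (u.toRight : Set W) := by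
  simp [SimpleGraph.isClique_iff, Set.Pairwise, Sum.forall, joinG]

section CliquePoly

variable {V W : Type*} [Fintype V] [Fintype W]

noncomputable def cliquePoly (G : SimpleGraph V) (t : ℝ) : ℝ :=
  ∑ s ∈ univ.filter (fun s : Finset V ↦ G.IsClique (s : Set V)), t ^ #s

lemma cliquePoly_eq_sum_card_cliqueFinset (G : SimpleGraph V) (t : ℝ) :
    cliquePoly G t = ∑ k ∈ range (Fintype.card V + 1), (#(G.cliqueFinset k) : ℝ) * t ^ k := by
  rw [cliquePoly, ← sum_fiberwise_of_maps_to (g := card) (t := range (Fintype.card V + 1))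
    fun s _ ↦ mem_range_succ_iff.mpr (card_le_univ s)]
  refine sum_congr rfl fun k _ ↦ ?_
  rw [← nsmul_eq_mul, ← sum_const]
  refine sum_congr ?_ fun s hs ↦ ?_
  · ext s
    simp [SimpleGraph.isNClique_iff]
  · rw [(mem_filter.mp hs).2.card_eq]

lemma fPoly_eq_cliquePoly (G : SimpleGraph V) (t : ℝ) : fPoly G t = cliquePoly G t := by
  rw [cliquePoly_eq_sum_card_cliqueFinset, sum_range_succ', SimpleGraph.cliqueFinset_zero, fPoly]
  simp [add_comm]

lemma fPoly_congr {G : SimpleGraph V} {G' : SimpleGraph W} (e : G ≃g G') (t : ℝ) :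
    fPoly G' t = fPoly G t := by
  simp only [fPoly, e.card_cliqueFinset_eq, Fintype.card_congr e.toEquiv]

lemma cliquePoly_joinG (G : SimpleGraph V) (H : SimpleGraph W) (t : ℝ) :
    cliquePoly (joinG G H) t = cliquePoly G t * cliquePoly H t := by
  rw [cliquePoly, cliquePoly, cliquePoly, sum_mul_sum, ← sum_product']
  refine sum_equiv sumEquiv.toEquiv (fun u ↦ ?_) fun u _ ↦ ?_
  · simp [isClique_joinG_iff]
  · simp [← pow_add, card_toLeft_add_card_toRight]

lemma fPoly_joinG (G : SimpleGraph V) (H : SimpleGraph W) (t : ℝ) :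
    fPoly (joinG G H) t = fPoly G t * fPoly H t := by
  simp only [fPoly_eq_cliquePoly, cliquePoly_joinG]

end CliquePoly

section SphereBelowJoin

variable {V W : Type*} (G : SimpleGraph V) (H : SimpleGraph W) (g : V → ℝ) (h : W → ℝ)

def sphereBelowInlIso {v : V} (hv : ∀ w, g v ≤ h w) :
    sphereBelow G g v ≃g sphereBelow (joinG G H) (Sum.elim g h) (.inl v) where
  toFun y := ⟨.inl y, y.2⟩
  invFun
    | ⟨.inl y, hy⟩ => ⟨y, hy⟩
    | ⟨.inr w, hw⟩ => absurd hw.2 (hv w).not_gt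
  left_inv _ := rfl
  right_inv
    | ⟨.inl _, _⟩ => rfl
    | ⟨.inr w, hw⟩ => absurd hw.2 (hv w).not_gt
  map_rel_iff' := Iff.rfl

def sphereBelowInrIso {w : W} (hw : ∀ v, g v < h w) :
    joinG G (sphereBelow H h w) ≃g sphereBelow (joinG G H) (Sum.elim g h) (.inr w) where
  toFun
    | .inl v => ⟨.inl v, trivial, hw v⟩
    | .inr y => ⟨.inr y, y.2⟩
  invFun
    | ⟨.inl v, _⟩ => .inl v
    | ⟨.inr y, hy⟩ => .inr ⟨y, hy⟩
  left_inv := by rintro (_ | _) <;> rfl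
  right_inv := by rintro ⟨_ | _, _⟩ <;> rfl
  map_rel_iff' := by rintro (_ | _) (_ | _) <;> exact Iff.rfl

end SphereBelowJoin

theorem join_index_polynomials_general {V W : Type*} [Fintype V] [Fintype W]
    (G : SimpleGraph V) (H : SimpleGraph W) (g : V → ℝ) (h : W → ℝ)
    (hlt : ∀ (v : V) (w : W), g v < h w) (t : ℝ) :
    (∀ v : V, fPoly (sphereBelow (joinG G H) (Sum.elim g h) (Sum.inl v)) t
        = fPoly (sphereBelow G g v) t)
    ∧ (∀ w : W, fPoly (sphereBelow (joinG G H) (Sum.elim g h) (Sum.inr w)) t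
        = fPoly G t * fPoly (sphereBelow H h w) t) := by
  refine ⟨fun v ↦ ?_, fun w ↦ ?_⟩
  · exact fPoly_congr (sphereBelowInlIso G H g h fun w ↦ (hlt v w).le) t
  · rw [fPoly_congr (sphereBelowInrIso G H g h fun v ↦ hlt v w), fPoly_joinG]

/-- If `min h > max g`, the index polynomials of the combined function `(g,h)` on the
join `G + H` satisfy `i_{v,(g,h)}(t) = i_{v,g}(t)` for `v ∈ V` and
`i_{w,(g,h)}(t) = f_G(t)·i_{w,h}(t)` for `w ∈ W`. -/
theorem join_index_polynomials {V W : Type*} [Fintype V] [Fintype W]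
    (G : SimpleGraph V) (H : SimpleGraph W) (g : V → ℝ) (h : W → ℝ)
    (hgl : ∀ ⦃a b : V⦄, G.Adj a b → g a ≠ g b)
    (hhl : ∀ ⦃a b : W⦄, H.Adj a b → h a ≠ h b)
    (hlt : ∀ (v : V) (w : W), g v < h w) (t : ℝ) :
    (∀ v : V, fPoly (sphereBelow (joinG G H) (Sum.elim g h) (Sum.inl v)) t
        = fPoly (sphereBelow G g v) t)
    ∧ (∀ w : W, fPoly (sphereBelow (joinG G H) (Sum.elim g h) (Sum.inr w)) t
        = fPoly G t * fPoly (sphereBelow H h w) t) :=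
  join_index_polynomials_general G H g h hlt t
end

section
/- Gauss-Bonnet formula for the f-polynomial: for any finite simple graph G=(V,E), f_G(t) = 1 + Σ_{x∈V} F_{S(x)}(t), where F_A(t) = ∫₀^t f_A(s) ds is the antiderivative of the f-polynomial of A and S(x) is the unit sphere of x. -/
open Finset
open scoped Classical

/-- The antiderivative `F_G(t) = ∫₀ᵗ f_G(s) ds = t + Σ_k f_k t^{k+2}/(k+2)`. -/
noncomputable def FPoly {V : Type*} [Fintype V] (G : SimpleGraph V) (t : ℝ) : ℝ :=
  t + ∑ k ∈ Finset.range (Fintype.card V),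
    ((G.cliqueFinset (k + 1)).card : ℝ) * t ^ (k + 2) / (k + 2)

/-- The unit sphere `S(x)`: the induced subgraph on the neighbors of `x`. -/
def unitSphere {V : Type*} (G : SimpleGraph V) (x : V) : SimpleGraph (G.neighborSet x) :=
  G.induce (G.neighborSet x)

/-!
Removing `x` turns the `(k + 2)`-cliques of `G` through `x` bijectively into the `(k + 1)`-cliques
of the unit sphere `S(x)`. Summing over `x` therefore counts every `(k + 2)`-clique of `G` exactly
`k + 2` times, which cancels the denominator `k + 2` of the antiderivative; the linear terms `t` of
the `F_{S(x)}` add up to `|V| t`, the vertex term of `f_G`.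
-/

namespace SimpleGraph

variable {V : Type*} (G : SimpleGraph V)

theorem card_cliqueFinset_unitSphere [Fintype V] (x : V) (n : ℕ) :
    #((unitSphere G x).cliqueFinset n) = #{s ∈ G.cliqueFinset (n + 1) | x ∈ s} := by
  have mem_neighborSet_of_mem_erase {s : Finset V} (hs : G.IsNClique (n + 1) s ∧ x ∈ s) :
      ∀ y ∈ s.erase x, y ∈ G.neighborSet x := fun y hy ↦
    hs.1.isClique hs.2 (mem_of_mem_erase hy) (ne_of_mem_erase hy).symm
  refine card_nbij' (fun t ↦ insert x (t.map (.subtype _)))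
    (fun s ↦ (s.erase x).subtype (· ∈ G.neighborSet x)) ?_ ?_ ?_ ?_
  · intro t ht
    simp only [coe_cliqueFinset, coe_filter, Set.mem_ofPred_eq, mem_cliqueFinset_iff,
      mem_insert_self, and_true] at ht ⊢
    exact ((isNClique_induce_iff _ t n).1 ht).insert fun b hb ↦ property_of_mem_map_subtype t hb
  · intro s hs
    simp only [coe_filter, Set.mem_ofPred_eq, mem_cliqueFinset_iff] at hs
    rw [mem_coe, mem_cliqueFinset_iff, unitSphere, isNClique_induce_iff,
      subtype_map_of_mem (mem_neighborSet_of_mem_erase hs)]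
    exact hs.1.erase_of_mem hs.2
  · intro t _
    ext ⟨y, hy⟩
    simpa [(G.ne_of_adj hy).symm] using exists_prop_of_true (p := G.Adj x y) hy
  · intro s hs
    simp only [coe_filter, Set.mem_ofPred_eq, mem_cliqueFinset_iff] at hs
    simp only [subtype_map_of_mem (mem_neighborSet_of_mem_erase hs), insert_erase hs.2]

theorem sum_card_cliqueFinset_unitSphere [Fintype V] (n : ℕ) :
    ∑ x, #((unitSphere G x).cliqueFinset n) = (n + 1) * #(G.cliqueFinset (n + 1)) := by
  simp_rw [card_cliqueFinset_unitSphere]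
  calc ∑ x, #{s ∈ G.cliqueFinset (n + 1) | x ∈ s}
      = ∑ s ∈ G.cliqueFinset (n + 1), #{x ∈ univ | x ∈ s} :=
        sum_card_bipartiteAbove_eq_sum_card_bipartiteBelow _
    _ = ∑ s ∈ G.cliqueFinset (n + 1), (n + 1) :=
        sum_congr rfl fun s hs ↦ by rw [filter_univ_mem, (mem_cliqueFinset_iff.1 hs).card_eq]
    _ = (n + 1) * #(G.cliqueFinset (n + 1)) := by rw [sum_const, smul_eq_mul, mul_comm]

theorem card_cliqueFinset_one [Fintype V] : #(G.cliqueFinset 1) = Fintype.card V := by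
  suffices G.cliqueFinset 1 = univ.map ⟨singleton, singleton_injective⟩ by
    rw [this, card_map, card_univ]
  ext s
  simp [eq_comm]

theorem sum_range_card_cliqueFinset_eq_of_card_le [Fintype V] {M : Type*} [AddCommMonoid M]
    (f : ℕ → ℕ → M) (hf : ∀ k, f k 0 = 0) {N : ℕ} (hN : Fintype.card V ≤ N) :
    ∑ k ∈ range (Fintype.card V), f k #(G.cliqueFinset (k + 1)) =
      ∑ k ∈ range N, f k #(G.cliqueFinset (k + 1)) := by
  refine sum_subset (range_subset_range.2 hN) fun k _ hk ↦ ?_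
  rw [cliqueFinset_eq_empty_iff.2 (cliqueFree_of_card_lt (by simp at hk; omega)), card_empty, hf]

end SimpleGraph

open SimpleGraph

theorem fPoly_eq_one_add_card_mul_add_sum {V : Type*} [Fintype V] (G : SimpleGraph V) (t : ℝ) :
    fPoly G t = 1 + (Fintype.card V * t + ∑ k ∈ range (Fintype.card V),
      (#(G.cliqueFinset (k + 2)) : ℝ) * t ^ (k + 2)) := by
  rw [fPoly, G.sum_range_card_cliqueFinset_eq_of_card_le (fun k c ↦ (c : ℝ) * t ^ (k + 1))
    (by simp) (Nat.le_succ _), sum_range_succ', card_cliqueFinset_one, pow_one, add_comm (_ * t)]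

-- The instance argument lets the right-hand side use whatever `DecidableEq W` the call site
-- synthesizes (e.g. `Subtype.instDecidableEq`), not the classical one baked into `FPoly`.
theorem FPoly_eq_sum_range_of_card_le {W : Type*} [Fintype W] [DecidableEq W]
    (A : SimpleGraph W) (t : ℝ) {N : ℕ} (hN : Fintype.card W ≤ N) :
    FPoly A t =
      t + ∑ k ∈ range N, (#(A.cliqueFinset (k + 1)) : ℝ) * t ^ (k + 2) / (k + 2) := by
  rw [FPoly, A.sum_range_card_cliqueFinset_eq_of_card_le
    (fun k c ↦ (c : ℝ) * t ^ (k + 2) / (k + 2)) (fun k ↦ by simp) hN]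
  congr!

theorem sum_FPoly_unitSphere_eq {V : Type*} [Fintype V] (G : SimpleGraph V) (t : ℝ) :
    ∑ x, FPoly (unitSphere G x) t = Fintype.card V * t + ∑ k ∈ range (Fintype.card V),
      (#(G.cliqueFinset (k + 2)) : ℝ) * t ^ (k + 2) := by
  simp_rw [FPoly_eq_sum_range_of_card_le _ t
      (Fintype.card_le_of_injective _ Subtype.val_injective : _ ≤ Fintype.card V),
    sum_add_distrib, sum_const, card_univ, nsmul_eq_mul, sum_comm (s := univ),
    ← sum_div, ← sum_mul, ← Nat.cast_sum, sum_card_cliqueFinset_unitSphere]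
  congr 1
  refine sum_congr rfl fun k _ ↦ ?_
  push_cast
  field_simp
  ring

/-- Gauss–Bonnet for the f-polynomial: `f_G(t) = 1 + Σ_{x∈V} F_{S(x)}(t)`. -/
theorem gauss_bonnet_fPoly {V : Type*} [Fintype V] (G : SimpleGraph V) (t : ℝ) :
    fPoly G t = 1 + ∑ x : V, FPoly (unitSphere G x) t := by
  rw [fPoly_eq_one_add_card_mul_add_sum, sum_FPoly_unitSphere_eq]
end

section
/- Intersection generating function localization: for finite simple graphs G and H on a common vertex set (or subgraphs of a common graph), f_{G,H}(t,s) = Σ_{v∈V(G), w∈V(H)} [ f_{B_g(v),B_g(w)}(t,s) - f_{B_g(v),S_g(w)}(t,s) - f_{S_g(v),B_g(w)}(t,s) + f_{S_g(v),S_g(w)}(t,s) ], where g is a locally injective function, S_g(v) is the sub-level sphere and B_g(v) = S_g(v) ∪ {v} the sub-level ball. -/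
/-!
Write `f_{G,H}` as a sum over all pairs of cliques `(x, y)`; the alternating sum of the theorem
then weighs `(x, y)` by `c_G(v, x) c_H(w, y)`, where `c(v, x) = [x ⊆ B_g(v)] - [x ⊆ S_g(v)]`.
For `v ∉ x` the two brackets agree, for `v ∈ x` only the first can hold, and it holds exactly
when `v` is `g`-maximal on `x`. Local injectivity makes this vertex unique on a clique, so
`Σ_v c(v, x) = 1` for every nonempty clique: each intersecting pair is counted once, at the pair
of its `g`-maximal vertices.
-/

open Finset
open scoped Classical

/-- The intersection generating function of cliques of `A` inside `sA` and cliques of `B`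
inside `sB`: `Σ t^{|x|} s^{|y|}` over pairs of intersecting (nonempty) cliques. -/
noncomputable def fInt {V : Type*} [Fintype V] (A B : SimpleGraph V) (sA sB : Set V)
    (t s : ℝ) : ℝ :=
  ∑ x ∈ Finset.univ.filter (fun x : Finset V => A.IsClique (x : Set V) ∧ ↑x ⊆ sA),
    ∑ y ∈ Finset.univ.filter (fun y : Finset V => B.IsClique (y : Set V) ∧ ↑y ⊆ sB),
      if (x ∩ y).Nonempty then t ^ x.card * s ^ y.card else 0

/-- The sub-level sphere of `v`: neighbors `u` of `v` in `A` with `g u < g v`. -/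
def sphSet {V : Type*} (A : SimpleGraph V) (g : V → ℝ) (v : V) : Set V :=
  {u | A.Adj v u ∧ g u < g v}

/-- The sub-level ball `B_g(v) = S_g(v) ∪ {v}`. -/
def ballSet {V : Type*} (A : SimpleGraph V) (g : V → ℝ) (v : V) : Set V :=
  insert v (sphSet A g v)

section LocalWeight

variable {V : Type*} {A : SimpleGraph V} {g : V → ℝ} {x : Finset V} {v : V}

lemma not_subset_sphSet_of_mem (hv : v ∈ x) : ¬ (x : Set V) ⊆ sphSet A g v :=
  fun h => A.irrefl (h hv).1

lemma subset_ballSet_iff_of_notMem (hv : v ∉ x) :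
    (x : Set V) ⊆ ballSet A g v ↔ (x : Set V) ⊆ sphSet A g v :=
  ⟨fun h _ hu => (h hu).resolve_left fun huv => hv (huv ▸ hu),
    fun h => h.trans (Set.subset_insert _ _)⟩

lemma subset_ballSet_iff_eq_of_forall_le (hg : ∀ ⦃a b : V⦄, A.Adj a b → g a ≠ g b)
    (hx : A.IsClique (x : Set V)) {v₀ : V} (hv₀ : v₀ ∈ x) (hmax : ∀ u ∈ x, g u ≤ g v₀)
    (hv : v ∈ x) : (x : Set V) ⊆ ballSet A g v ↔ v = v₀ := by
  constructor
  · intro h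
    rcases h hv₀ with h | ⟨-, hlt⟩
    · exact h.symm
    · exact absurd hlt (not_lt.2 (hmax v hv))
  · rintro rfl u hu
    rcases eq_or_ne u v with rfl | hne
    · exact Set.mem_insert _ _
    · have hadj : A.Adj v u := hx hv hu hne.symm
      exact Set.mem_insert_of_mem _ ⟨hadj, (hmax u hu).lt_of_ne (hg hadj).symm⟩

noncomputable def localWeight (A : SimpleGraph V) (g : V → ℝ) (v : V) (x : Finset V) : ℝ :=
  (if (x : Set V) ⊆ ballSet A g v then 1 else 0) -
    (if (x : Set V) ⊆ sphSet A g v then 1 else 0)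

lemma localWeight_eq_ite_of_forall_le (hg : ∀ ⦃a b : V⦄, A.Adj a b → g a ≠ g b)
    (hx : A.IsClique (x : Set V)) {v₀ : V} (hv₀ : v₀ ∈ x) (hmax : ∀ u ∈ x, g u ≤ g v₀)
    (v : V) : localWeight A g v x = if v = v₀ then 1 else 0 := by
  unfold localWeight
  by_cases hv : v ∈ x
  · simp only [subset_ballSet_iff_eq_of_forall_le hg hx hv₀ hmax hv, not_subset_sphSet_of_mem hv,
      if_false, sub_zero]
  · have hne : v ≠ v₀ := fun h => hv (h ▸ hv₀)
    rw [subset_ballSet_iff_of_notMem hv, sub_self, if_neg hne]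

lemma sum_localWeight_of_isClique [Fintype V] (hg : ∀ ⦃a b : V⦄, A.Adj a b → g a ≠ g b)
    (hx : A.IsClique (x : Set V)) (hne : x.Nonempty) :
    ∑ v, localWeight A g v x = 1 := by
  obtain ⟨v₀, hv₀, hmax⟩ := x.exists_max_image g hne
  simp [localWeight_eq_ite_of_forall_le hg hx hv₀ hmax]

end LocalWeight

section Cliques

variable {V : Type*} [Fintype V]

lemma fInt_eq_sum_cliques (A B : SimpleGraph V) (sA sB : Set V) (t s : ℝ) :
    fInt A B sA sB t s =
      ∑ x ∈ univ.filter (fun x : Finset V => A.IsClique (x : Set V)),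
        ∑ y ∈ univ.filter (fun y : Finset V => B.IsClique (y : Set V)),
          (if (x : Set V) ⊆ sA then 1 else 0) * (if (y : Set V) ⊆ sB then 1 else 0) *
            (if (x ∩ y).Nonempty then t ^ x.card * s ^ y.card else 0) := by
  simp only [fInt, Finset.sum_filter, ite_and, ite_mul, one_mul, zero_mul, Finset.sum_ite_irrel,
    Finset.sum_const_zero]

lemma fInt_ball_sph_alternating_sum (G H : SimpleGraph V) (g : V → ℝ) (v w : V) (t s : ℝ) :
    fInt G H (ballSet G g v) (ballSet H g w) t s - fInt G H (ballSet G g v) (sphSet H g w) t s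
        - fInt G H (sphSet G g v) (ballSet H g w) t s + fInt G H (sphSet G g v) (sphSet H g w) t s =
      ∑ x ∈ univ.filter (fun x : Finset V => G.IsClique (x : Set V)),
        ∑ y ∈ univ.filter (fun y : Finset V => H.IsClique (y : Set V)),
          localWeight G g v x * localWeight H g w y *
            (if (x ∩ y).Nonempty then t ^ x.card * s ^ y.card else 0) := by
  simp only [fInt_eq_sum_cliques, ← Finset.sum_sub_distrib, ← Finset.sum_add_distrib]
  exact sum_congr rfl fun x _ => sum_congr rfl fun y _ => by unfold localWeight; ring

end Cliques

/-- Localization of the intersection generating function: for graphs `G`, `H` on a common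
vertex set and locally injective `g`,
`f_{G,H}(t,s) = Σ_{v,w} [f_{B_g(v),B_g(w)} - f_{B_g(v),S_g(w)} - f_{S_g(v),B_g(w)} + f_{S_g(v),S_g(w)}]`. -/
theorem fInt_localization {V : Type*} [Fintype V] (G H : SimpleGraph V) (g : V → ℝ)
    (hgG : ∀ ⦃a b : V⦄, G.Adj a b → g a ≠ g b)
    (hgH : ∀ ⦃a b : V⦄, H.Adj a b → g a ≠ g b) (t s : ℝ) :
    fInt G H Set.univ Set.univ t s =
      ∑ v : V, ∑ w : V,
        (fInt G H (ballSet G g v) (ballSet H g w) t s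
         - fInt G H (ballSet G g v) (sphSet H g w) t s
         - fInt G H (sphSet G g v) (ballSet H g w) t s
         + fInt G H (sphSet G g v) (sphSet H g w) t s) := by
  simp only [fInt_ball_sph_alternating_sum]
  rw [fInt_eq_sum_cliques, sum_comm_cycle]
  refine sum_congr rfl fun x hx => ?_
  rw [sum_comm_cycle]
  refine sum_congr rfl fun y hy => ?_
  by_cases hxy : (x ∩ y).Nonempty
  · simp_rw [← sum_mul, ← mul_sum, ← sum_mul]
    rw [sum_localWeight_of_isClique hgG (mem_filter.1 hx).2 (hxy.mono inter_subset_left),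
      sum_localWeight_of_isClique hgH (mem_filter.1 hy).2 (hxy.mono inter_subset_right)]
    simp
  · simp [hxy]
end
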